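/- arXiv:2312.04064 — 2 statements merged into one kernel-verified Lean document; each statement's English description precedes it below -/
import Mathlib

section
/- Let G be a finite type and F : Finset G → ℝ a monotone, nonnegative, submodular set function with F(∅) = 0. Let S_k be the set produced by k steps of the greedy algorithm (at each step adding an element maximizing the marginal gain), and let OPT_k = max over subsets S with |S| = k of F(S). Then F(S_k) ≥ (1 − (1 − 1/k)^k) · OPT_k ≥ (1 − 1/e) · OPT_k. -/
/-!
By monotonicity and submodularity, the gap `F T - F A` to a `k`-set `T` is at most the sum of the
`k` marginal gains of the elements of `T` over `A`, hence at most `k` times the greedy gain.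
So each greedy step shrinks the gap by a factor `1 - 1/k`, and after `k` steps the gap is at
most `(1 - 1/k)^k F T ≤ F T / e`.
-/

open Finset

def IsSubmodular {G : Type*} [DecidableEq G] (F : Finset G → ℝ) : Prop :=
  ∀ X Y : Finset G, X ⊆ Y → ∀ g : G, F (insert g Y) - F Y ≤ F (insert g X) - F X

namespace IsSubmodular

variable {G : Type*} [DecidableEq G] {F : Finset G → ℝ}

theorem sub_le_sum_sub_insert (hF : IsSubmodular F) (A B : Finset G) :
    F (A ∪ B) - F A ≤ ∑ g ∈ B, (F (insert g A) - F A) := by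
  induction B using Finset.induction_on with
  | empty => simp
  | @insert b B hb ih =>
    have hb_gain := hF A (A ∪ B) subset_union_left b
    rw [sum_insert hb, union_insert]
    linarith

theorem sub_le_card_mul_sub_of_forall_insert_le (hF : IsSubmodular F) (hmono : Monotone F)
    {A A' T : Finset G} (hA' : ∀ g ∈ T, F (insert g A) ≤ F A') :
    F T - F A ≤ #T * (F A' - F A) := by
  have hgains : ∑ g ∈ T, (F (insert g A) - F A) ≤ #T * (F A' - F A) :=
    calc ∑ g ∈ T, (F (insert g A) - F A) ≤ ∑ _g ∈ T, (F A' - F A) :=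
          sum_le_sum fun g hg => sub_le_sub_right (hA' g hg) (F A)
      _ = #T * (F A' - F A) := by rw [sum_const, nsmul_eq_mul]
  have hT : F T ≤ F (A ∪ T) := hmono subset_union_right
  linarith [hF.sub_le_sum_sub_insert A T]

theorem sub_le_one_sub_inv_mul_of_forall_insert_le (hF : IsSubmodular F) (hmono : Monotone F)
    {A A' T : Finset G} (hT : T.Nonempty) (hA' : ∀ g ∈ T, F (insert g A) ≤ F A') :
    F T - F A' ≤ (1 - 1 / #T) * (F T - F A) := by
  have hcard : (0 : ℝ) < #T := by exact_mod_cast hT.card_pos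
  have hgain : (F T - F A) / #T ≤ F A' - F A := by
    rw [div_le_iff₀ hcard]
    linarith [hF.sub_le_card_mul_sub_of_forall_insert_le hmono hA']
  calc F T - F A' = (F T - F A) - (F A' - F A) := by ring
    _ ≤ (F T - F A) - (F T - F A) / #T := by linarith
    _ = (1 - 1 / #T) * (F T - F A) := by ring

end IsSubmodular

theorem greedy_submodular_approximation_general {G : Type*} [DecidableEq G]
    (F : Finset G → ℝ)
    (hmono : ∀ X Y : Finset G, X ⊆ Y → F X ≤ F Y)
    (hsub : ∀ X Y : Finset G, X ⊆ Y → ∀ g : G,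
      F (insert g Y) - F Y ≤ F (insert g X) - F X)
    (hnonneg : ∀ X : Finset G, 0 ≤ F X)
    (k : ℕ) (hk : 1 ≤ k)
    (S : ℕ → Finset G)
    (hgreedy : ∀ i < k, ∃ g : G, g ∉ S i ∧ S (i + 1) = insert g (S i) ∧
      ∀ g' : G, F (insert g' (S i)) ≤ F (insert g (S i)))
    (OPT : ℝ)
    (hOPT : IsGreatest {x : ℝ | ∃ T : Finset G, T.card = k ∧ F T = x} OPT) :
    (1 - (1 - 1 / (k : ℝ)) ^ k) * OPT ≤ F (S k) ∧
      (1 - 1 / Real.exp 1) * OPT ≤ (1 - (1 - 1 / (k : ℝ)) ^ k) * OPT := by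
  obtain ⟨⟨T, hTcard, rfl⟩, -⟩ := hOPT
  have hk' : (1 : ℝ) ≤ k := by exact_mod_cast hk
  have hratio : 0 ≤ 1 - 1 / (k : ℝ) := sub_nonneg.2 (div_le_one_of_le₀ hk' (by positivity))
  have hgap : F T - F (S k) ≤ (1 - 1 / (k : ℝ)) ^ k * (F T - F (S 0)) :=
    le_geom (u := fun i => F T - F (S i)) hratio k fun i hi => by
      obtain ⟨g, -, hstep, hmax⟩ := hgreedy i hi
      rw [hstep, ← hTcard]
      exact IsSubmodular.sub_le_one_sub_inv_mul_of_forall_insert_le hsub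
        (fun X Y h => hmono X Y h) (card_pos.mp (hTcard ▸ hk)) fun g' _ => hmax g'
  have hexp : (1 - 1 / (k : ℝ)) ^ k ≤ 1 / Real.exp 1 := by
    simpa [Real.exp_neg] using Real.one_sub_div_pow_le_exp_neg (n := k) (t := 1) hk'
  constructor
  · nlinarith [hnonneg (S 0), pow_nonneg hratio k]
  · exact mul_le_mul_of_nonneg_right (by linarith) (hnonneg T)

theorem greedy_submodular_approximation {G : Type*} [Fintype G] [DecidableEq G]
    (F : Finset G → ℝ) (hF0 : F ∅ = 0)
    (hmono : ∀ X Y : Finset G, X ⊆ Y → F X ≤ F Y)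
    (hsub : ∀ X Y : Finset G, X ⊆ Y → ∀ g : G,
      F (insert g Y) - F Y ≤ F (insert g X) - F X)
    (hnonneg : ∀ X : Finset G, 0 ≤ F X)
    (k : ℕ) (hk : 1 ≤ k) (hkcard : k ≤ Fintype.card G)
    (S : ℕ → Finset G) (hS0 : S 0 = ∅)
    (hgreedy : ∀ i < k, ∃ g : G, g ∉ S i ∧ S (i + 1) = insert g (S i) ∧
      ∀ g' : G, F (insert g' (S i)) ≤ F (insert g (S i)))
    (OPT : ℝ)
    (hOPT : IsGreatest {x : ℝ | ∃ T : Finset G, T.card = k ∧ F T = x} OPT) :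
    (1 - (1 - 1 / (k : ℝ)) ^ k) * OPT ≤ F (S k) ∧
      (1 - 1 / Real.exp 1) * OPT ≤ (1 - (1 - 1 / (k : ℝ)) ^ k) * OPT :=
  greedy_submodular_approximation_general F hmono hsub hnonneg k hk S hgreedy OPT hOPT
end

section
/- Let a_0, a_1, …, a_k be a sequence of reals with a_0 = 0, and suppose OPT ≥ 0 satisfies OPT − a_i ≤ k · (a_{i+1} − a_i) for all 0 ≤ i < k. Then OPT − a_k ≤ (1 − 1/k)^k · OPT, and consequently a_k ≥ (1 − (1 − 1/k)^k) · OPT. -/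
theorem greedy_recursion_bound (k : ℕ) (hk : 1 ≤ k) (a : ℕ → ℝ) (ha0 : a 0 = 0)
    (OPT : ℝ) (hOPT : 0 ≤ OPT)
    (hrec : ∀ i < k, OPT - a i ≤ (k : ℝ) * (a (i + 1) - a i)) :
    OPT - a k ≤ (1 - 1 / (k : ℝ)) ^ k * OPT ∧
      (1 - (1 - 1 / (k : ℝ)) ^ k) * OPT ≤ a k := by
  have hkpos : (0:ℝ) < k := by exact_mod_cast hk
  have key : ∀ i ≤ k, OPT - a i ≤ (1 - 1 / (k : ℝ)) ^ i * OPT := by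
    intro i hi
    induction i with
    | zero => simp [ha0]
    | succ n ih =>
      have hn : n < k := Nat.lt_of_succ_le hi
      have ih' := ih (le_of_lt hn)
      have h1 := hrec n hn
      have step : OPT - a (n+1) ≤ (1 - 1/(k:ℝ)) * (OPT - a n) := by
        rw [show (1 - 1/(k:ℝ)) = ((k:ℝ)-1)/k by field_simp, div_mul_eq_mul_div,
          le_div_iff₀ hkpos]
        nlinarith [h1]
      calc OPT - a (n+1) ≤ (1 - 1/(k:ℝ)) * (OPT - a n) := step
        _ ≤ (1 - 1/(k:ℝ)) * ((1 - 1/(k:ℝ))^n * OPT) := by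
            apply mul_le_mul_of_nonneg_left ih'
            have : 1/(k:ℝ) ≤ 1 := by
              rw [div_le_one hkpos]; exact_mod_cast hk
            linarith
        _ = (1 - 1/(k:ℝ))^(n+1) * OPT := by ring
  have h := key k le_rfl
  exact ⟨h, by linarith⟩
end
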